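/- Let S ⊂ ℝ^d be a finite point set in the hyperplane x_1 = 0 with f_k(S) < f_{k-1}(S), such that no (k+1)-flat through a generic origin point contains more points of S than some k-flat does, and |S| − g_k(S) = c. Then for sufficiently large m, the set P = S ∪ L (with L a set of m collinear points on a line through the origin perpendicular to the hyperplane, avoiding the origin, with no flat spanned by S incident to the origin) satisfies f_{k+1}(P) < f_k(P) and |P| − g_{k+1}(P) = c. -/

import Mathlib

open scoped Classical

noncomputable def adim {K V : Type*} [Field K] [AddCommGroup V] [Module K V]
    (s : AffineSubspace K V) : ℤ :=
  if s = ⊥ then -1 else (Module.finrank K s.direction : ℤ)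

/-- `Q` spans the flat `Γ` of dimension `k`: `Γ` is the affine span of `Q ∩ Γ`. -/
def Spans {K V : Type*} [Field K] [AddCommGroup V] [Module K V]
    (Q : Set V) (k : ℤ) (Γ : AffineSubspace K V) : Prop :=
  adim Γ = k ∧ affineSpan K (Q ∩ ↑Γ) = Γ

/-- the number of `k`-flats spanned by `Q` (for `k = -1` this counts the empty flat). -/
noncomputable def nFlats (K : Type*) {V : Type*} [Field K] [AddCommGroup V] [Module K V]
    (Q : Set V) (k : ℤ) : ℕ :=
  Nat.card {Γ : AffineSubspace K V // Spans Q k Γ}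

/-- the essential dimension of `Q` is at most `t`. -/
def EssDimLE (K : Type*) {V : Type*} [Field K] [AddCommGroup V] [Module K V]
    (Q : Set V) (t : ℤ) : Prop :=
  ∃ G : Finset (AffineSubspace K V), (∀ Γ ∈ G, 1 ≤ adim Γ) ∧
    (∀ q ∈ Q, ∃ Γ ∈ G, q ∈ Γ) ∧ ∑ Γ ∈ G, adim Γ ≤ t

/-- `g_m(P)`: the maximum size of a subset of `P` of essential dimension at most `m`. -/
noncomputable def gdim (K : Type*) {V : Type*} [Field K] [AddCommGroup V] [Module K V]
    (P : Finset V) (m : ℤ) : ℕ :=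
  sSup {c : ℕ | ∃ P' ⊆ P, EssDimLE K (P' : Set V) m ∧ P'.card = c}

/-!
`S` lies in a hyperplane `W` and `L` on an axis `K ∙ v` meeting `W` only at the origin, which
lies on no flat spanned by `S`. A `j`-flat `Γ` spanned by `P = S ∪ L` is the join of
`T = span (S ∩ Γ) ≤ W` with `span (L ∩ Γ)`, so either `Γ = T` is spanned by `S`, or `Γ` meets
`L` in one point `l` and `Γ = span (T, l)` with `dim T = j - 1`, or `Γ` contains two points of `L`,
hence the whole axis, and `Γ = T ⊔ axis` with `dim T = j - 2` (as `0 ∉ T`). The flats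
`span (T, l)` are pairwise distinct, since `span (T, l) ∩ W = T` and a second point of `L` would
put the origin into `T`. Hence `m f_{k-1}(S) ≤ f_k(P)` and
`f_{k+1}(P) ≤ f_{k+1}(S) + m f_k(S) + f_{k-1}(S)`, and `f_k(S) < f_{k-1}(S)` decides for large `m`.

For `g`, adding the axis to a cover of an extremal subset of `S` gives
`g_{k+1}(P) ≥ g_k(S) + m`. Conversely, take a cover of total dimension `k + 1` of a subset of `P`.
If one of its flats contains the axis, replacing it by its section with `W` (or dropping it, if
that section is the origin) covers the part in `S` in dimension `k`. Otherwise every flat of the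
cover carries at most one point of `L`, so at most `|S| + k + 1 ≤ m` points are covered.
-/

open Module AffineSubspace

section Flats

variable {K V : Type*} [Field K] [AddCommGroup V] [Module K V]

lemma adim_of_ne_bot {s : AffineSubspace K V} (hs : s ≠ ⊥) :
    adim s = finrank K s.direction :=
  if_neg hs

lemma adim_affineSpan_singleton (p : V) : adim (affineSpan K ({p} : Set V)) = 0 := by
  rw [adim_of_ne_bot (by simp), direction_affineSpan, vectorSpan_singleton, finrank_bot,
    Nat.cast_zero]

lemma adim_span_singleton_toAffineSubspace {v : V} (hv : v ≠ 0) :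
    adim (K ∙ v).toAffineSubspace = 1 := by
  rw [adim_of_ne_bot ((nonempty_iff_ne_bot _).1 ⟨0, (K ∙ v).zero_mem⟩),
    Submodule.toAffineSubspace_direction, finrank_span_singleton hv, Nat.cast_one]

lemma affineSpan_inter_affineSpan_inter (Q : Set V) (A : Set V) :
    affineSpan K (Q ∩ affineSpan K (Q ∩ A)) = affineSpan K (Q ∩ A) := by
  refine le_antisymm (affineSpan_le.2 fun x hx => hx.2) (affineSpan_mono K ?_)
  exact fun x hx => ⟨hx.1, subset_affineSpan K _ hx⟩

lemma spans_affineSpan_singleton {Q : Set V} {q : V} (hq : q ∈ Q) :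
    Spans Q 0 (affineSpan K ({q} : Set V)) := by
  refine ⟨adim_affineSpan_singleton q, ?_⟩
  rw [coe_affineSpan_singleton, Set.inter_eq_right.2 (Set.singleton_subset_iff.2 hq)]

lemma finite_setOf_spans {Q : Set V} (hQ : Q.Finite) (j : ℤ) :
    {Γ : AffineSubspace K V | Spans Q j Γ}.Finite :=
  (hQ.powerset.image (affineSpan K)).subset fun Γ hΓ => ⟨Q ∩ Γ, Set.inter_subset_left, hΓ.2⟩

lemma nFlats_eq_ncard (Q : Set V) (j : ℤ) :
    nFlats K Q j = {Γ : AffineSubspace K V | Spans Q j Γ}.ncard :=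
  Nat.card_coe_set_eq _

lemma affineSpan_insert_inf_eq {T H : AffineSubspace K V} (hTH : T ≤ H) {l : V} (hl : l ∉ H) :
    affineSpan K (insert l (T : Set V)) ⊓ H = T := by
  have hT : T ≤ affineSpan K (insert l (T : Set V)) :=
    (subset_affineSpan K _).trans' (Set.subset_insert _ _)
  refine le_antisymm (fun x ⟨hxl, hxH⟩ => ?_) (le_inf hT hTH)
  rcases T.eq_bot_or_nonempty with rfl | ⟨q, hq⟩
  · rw [bot_coe, insert_empty_eq, SetLike.mem_coe, mem_affineSpan_singleton] at hxl
    exact absurd (hxl ▸ hxH) hl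
  obtain ⟨r, p, hp, rfl⟩ := (mem_affineSpan_insert_iff hq l _).1 hxl
  have hr : r = 0 := by
    by_contra hr
    have hdir : r • (l -ᵥ q) ∈ H.direction := by
      simpa using vsub_mem_direction hxH (hTH hp)
    have hlq : (l -ᵥ q) +ᵥ q ∈ H :=
      vadd_mem_of_mem_direction ((H.direction.smul_mem_iff hr).1 hdir) (hTH hq)
    exact hl (by simpa using hlq)
  simpa [hr] using hp

lemma span_singleton_toAffineSubspace_le {v l l' : V} (hl : l ∈ K ∙ v) (hl' : l' ∈ K ∙ v)
    (hne : l ≠ l') {Γ : AffineSubspace K V} (hlΓ : l ∈ Γ) (hl'Γ : l' ∈ Γ) :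
    (K ∙ v).toAffineSubspace ≤ Γ := by
  refine le_trans (le_of_eq ?_) (affineSpan_pair_le_of_mem_of_mem hlΓ hl'Γ)
  obtain ⟨c, hc⟩ := Submodule.mem_span_singleton.1 (sub_mem hl hl')
  have hc0 : c ≠ 0 := by
    rintro rfl
    exact hne (sub_eq_zero.1 (by simpa using hc.symm))
  refine (eq_of_direction_eq_of_nonempty_of_le ?_ ⟨l, left_mem_affineSpan_pair K l l'⟩
    (affineSpan_pair_le_of_mem_of_mem hl hl')).symm
  rw [Submodule.toAffineSubspace_direction, direction_affineSpan, vectorSpan_pair, vsub_eq_sub,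
    ← hc, Submodule.span_singleton_smul_eq (IsUnit.mk0 c hc0)]

variable [FiniteDimensional K V]

lemma adim_affineSpan_insert {T : AffineSubspace K V} {l : V} (hl : l ∉ T) :
    adim (affineSpan K (insert l (T : Set V))) = adim T + 1 := by
  rcases T.eq_bot_or_nonempty with rfl | ⟨q, hq⟩
  · rw [bot_coe, insert_empty_eq, adim_affineSpan_singleton, adim, if_pos rfl]
    norm_num
  have hT : T ≠ ⊥ := (nonempty_iff_ne_bot T).1 ⟨q, hq⟩
  have hlq : l -ᵥ q ∉ T.direction := fun h => hl (by simpa using vadd_mem_of_mem_direction h hq)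
  rw [adim_of_ne_bot (by simpa using (Set.insert_nonempty l (T : Set V)).ne_empty),
    adim_of_ne_bot hT, direction_affineSpan_insert hq, sup_comm,
    Submodule.finrank_sup_span_singleton hlq, Nat.cast_succ]

lemma adim_sup_span_singleton {W : Submodule K V} {v : V} (hv : v ∉ W) {T : AffineSubspace K V}
    (hTW : T ≤ W.toAffineSubspace) (h0 : (0 : V) ∉ T) :
    adim (T ⊔ (K ∙ v).toAffineSubspace) = adim T + 2 := by
  set T₀ := affineSpan K (insert (0 : V) (T : Set V))
  have hT₀W : T₀ ≤ W.toAffineSubspace :=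
    affineSpan_le.2 (Set.insert_subset W.zero_mem hTW)
  have hv0 : (0 : V) ≠ v := fun h => hv (h ▸ W.zero_mem)
  have hline : (K ∙ v).toAffineSubspace = line[K, (0 : V), v] :=
    le_antisymm (span_singleton_toAffineSubspace_le (K ∙ v).zero_mem
        (Submodule.mem_span_singleton_self v) hv0 (left_mem_affineSpan_pair K _ _)
        (right_mem_affineSpan_pair K _ _))
      (affineSpan_pair_le_of_mem_of_mem (K ∙ v).zero_mem (Submodule.mem_span_singleton_self v))
  have hsup : T ⊔ (K ∙ v).toAffineSubspace = affineSpan K (insert v (T₀ : Set V)) := by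
    rw [affineSpan_insert_affineSpan, hline, ← affineSpan_coe T, ← span_union, affineSpan_coe]
    congr 1
    ext x
    simp only [Set.mem_union, Set.mem_insert_iff, Set.mem_singleton_iff]
    tauto
  rw [hsup, adim_affineSpan_insert fun h => hv (hT₀W h), adim_affineSpan_insert h0]
  ring

end Flats

lemma sum_insert_le_add {ι M : Type*} [AddCommMonoid M] [PartialOrder M] [IsOrderedAddMonoid M]
    [DecidableEq ι] {s : Finset ι} {a : ι} {f : ι → M} (ha : 0 ≤ f a) :
    ∑ i ∈ insert a s, f i ≤ f a + ∑ i ∈ s, f i := by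
  by_cases has : a ∈ s
  · rw [Finset.insert_eq_of_mem has]
    exact le_add_of_nonneg_left ha
  · rw [Finset.sum_insert has]

section EssentialDimension

variable {K V : Type*} [Field K] [AddCommGroup V] [Module K V]

lemma EssDimLE.mono {Q : Set V} {s t : ℤ} (h : EssDimLE K Q s) (hst : s ≤ t) : EssDimLE K Q t :=
  let ⟨G, hG1, hG2, hG3⟩ := h
  ⟨G, hG1, hG2, hG3.trans hst⟩

lemma essDimLE_sub_one_of_cover {Q : Set V} {G : Finset (AffineSubspace K V)}
    (hG1 : ∀ Γ ∈ G, 1 ≤ adim Γ) (hG2 : ∀ q ∈ Q, ∃ Γ ∈ G, q ∈ Γ) {Γ₀ Γ' : AffineSubspace K V}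
    (hΓ₀ : Γ₀ ∈ G) (hQ : ∀ q ∈ Q, q ∈ Γ₀ → q ∈ Γ') (hlt : adim Γ' < adim Γ₀)
    (hpt : adim Γ' < 1 → ∀ q ∈ Q, q ∉ Γ') : EssDimLE K Q (∑ Γ ∈ G, adim Γ - 1) := by
  -- `Γ'` replaces `Γ₀` if it may belong to a cover (`1 ≤ adim Γ'`); otherwise `Γ₀` is dropped
  have hsum : ∑ Γ ∈ G.erase Γ₀, adim Γ = ∑ Γ ∈ G, adim Γ - adim Γ₀ := by
    rw [← Finset.sum_erase_add G _ hΓ₀]; ring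
  have hG1' : ∀ Γ ∈ G.erase Γ₀, 1 ≤ adim Γ := fun Γ hΓ => hG1 Γ (Finset.mem_of_mem_erase hΓ)
  have hcover : ∀ q ∈ Q, q ∉ Γ₀ → ∃ Γ ∈ G.erase Γ₀, q ∈ Γ := fun q hq hq₀ =>
    let ⟨Γ, hΓ, hqΓ⟩ := hG2 q hq
    ⟨Γ, Finset.mem_erase.2 ⟨fun h => hq₀ (h ▸ hqΓ), hΓ⟩, hqΓ⟩
  by_cases h1 : 1 ≤ adim Γ'
  · refine ⟨insert Γ' (G.erase Γ₀), Finset.forall_mem_insert _ _ _ |>.2 ⟨h1, hG1'⟩,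
      fun q hq => ?_, ?_⟩
    · by_cases hq₀ : q ∈ Γ₀
      · exact ⟨Γ', Finset.mem_insert_self _ _, hQ q hq hq₀⟩
      · obtain ⟨Γ, hΓ, hqΓ⟩ := hcover q hq hq₀
        exact ⟨Γ, Finset.mem_insert_of_mem hΓ, hqΓ⟩
    · linarith [sum_insert_le_add (s := G.erase Γ₀) (f := adim) (by omega : 0 ≤ adim Γ')]
  · refine ⟨G.erase Γ₀, hG1', fun q hq => hcover q hq fun hq₀ => ?_, ?_⟩
    · exact hpt (by omega) q hq (hQ q hq hq₀)
    · rw [hsum]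
      linarith [hG1 Γ₀ hΓ₀]

lemma bddAbove_gdim (P : Finset V) (t : ℤ) :
    BddAbove {c : ℕ | ∃ P' ⊆ P, EssDimLE K (P' : Set V) t ∧ P'.card = c} :=
  ⟨P.card, by rintro _ ⟨P', hP', -, rfl⟩; exact Finset.card_le_card hP'⟩

lemma le_gdim {P P' : Finset V} {t : ℤ} (hP' : P' ⊆ P) (h : EssDimLE K (P' : Set V) t) :
    P'.card ≤ gdim K P t :=
  le_csSup (bddAbove_gdim P t) ⟨P', hP', h, rfl⟩

lemma gdim_le {P : Finset V} {t : ℤ} {b : ℕ}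
    (h : ∀ P' ⊆ P, EssDimLE K (P' : Set V) t → P'.card ≤ b) : gdim K P t ≤ b :=
  csSup_le' (by rintro _ ⟨P', hP', hess, rfl⟩; exact h P' hP' hess)

lemma exists_essDimLE_card_eq_gdim (P : Finset V) {t : ℤ} (ht : 0 ≤ t) :
    ∃ P' ⊆ P, EssDimLE K (P' : Set V) t ∧ P'.card = gdim K P t :=
  Nat.sSup_mem (s := {c : ℕ | ∃ P' ⊆ P, EssDimLE K (P' : Set V) t ∧ P'.card = c})
    ⟨0, ∅, P.empty_subset, ⟨∅, by simp, by simp, by simpa using ht⟩, rfl⟩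
    (bddAbove_gdim P t)

end EssentialDimension

section AxialExtension

variable {K V : Type*} [Field K] [AddCommGroup V] [Module K V]

structure IsAxialExtension (W : Submodule K V) (v : V) (S L : Finset V) : Prop where
  notMem_submodule : v ∉ W
  subset_left : ∀ p ∈ S, p ∈ W
  subset_axis : ∀ p ∈ L, p ∈ K ∙ v
  zero_notMem_right : (0 : V) ∉ L
  zero_notMem_of_spanned :
    ∀ Γ : AffineSubspace K V, affineSpan K ((S : Set V) ∩ Γ) = Γ → (0 : V) ∉ Γ

namespace IsAxialExtension

variable {W : Submodule K V} {v : V} {S L : Finset V} (h : IsAxialExtension W v S L)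
include h

lemma notMem_of_mem_right {l : V} (hl : l ∈ L) : l ∉ W := by
  obtain ⟨c, rfl⟩ := Submodule.mem_span_singleton.1 (h.subset_axis l hl)
  have hc : c ≠ 0 := by
    rintro rfl
    exact h.zero_notMem_right (by simpa using hl)
  exact fun hcv => h.notMem_submodule ((W.smul_mem_iff hc).1 hcv)

lemma disjoint : Disjoint S L :=
  Finset.disjoint_left.2 fun p hpS hpL => h.notMem_of_mem_right hpL (h.subset_left p hpS)

lemma zero_notMem_left : (0 : V) ∉ S := fun h0 =>
  h.zero_notMem_of_spanned _ (spans_affineSpan_singleton (Finset.mem_coe.2 h0)).2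
    (mem_affineSpan K rfl)

lemma affineSpan_inter_le (A : Set V) : affineSpan K ((S : Set V) ∩ A) ≤ W.toAffineSubspace :=
  affineSpan_le.2 fun p hp => h.subset_left p hp.1

lemma le_of_spans {j : ℤ} {T : AffineSubspace K V} (hT : Spans (S : Set V) j T) :
    T ≤ W.toAffineSubspace :=
  hT.2 ▸ h.affineSpan_inter_le _

lemma zero_notMem_affineSpan_inter (A : Set V) : (0 : V) ∉ affineSpan K ((S : Set V) ∩ A) :=
  h.zero_notMem_of_spanned _ (affineSpan_inter_affineSpan_inter _ _)

lemma axis_le {l l' : V} (hl : l ∈ L) (hl' : l' ∈ L) (hne : l ≠ l') {Γ : AffineSubspace K V}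
    (hlΓ : l ∈ Γ) (hl'Γ : l' ∈ Γ) : (K ∙ v).toAffineSubspace ≤ Γ :=
  span_singleton_toAffineSubspace_le (h.subset_axis l hl) (h.subset_axis l' hl') hne hlΓ hl'Γ

lemma injOn_affineSpan_insert (j : ℤ) :
    Set.InjOn (fun p : AffineSubspace K V × V => affineSpan K (insert p.2 (p.1 : Set V)))
      ({T | Spans (S : Set V) j T} ×ˢ (L : Set V)) := by
  rintro ⟨T, l⟩ ⟨hT : Spans (S : Set V) j T, hl : l ∈ L⟩
    ⟨T', l'⟩ ⟨hT' : Spans (S : Set V) j T', hl' : l' ∈ L⟩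
    (heq : affineSpan K (insert l (T : Set V)) = affineSpan K (insert l' (T' : Set V)))
  have hinf := affineSpan_insert_inf_eq (h.le_of_spans hT) (h.notMem_of_mem_right hl)
  obtain rfl : T = T' := by
    rw [← hinf, heq, affineSpan_insert_inf_eq (h.le_of_spans hT') (h.notMem_of_mem_right hl')]
  refine Prod.ext rfl (by_contra fun hne => h.zero_notMem_of_spanned T hT.2 ?_)
  -- two distinct points of `L` would put the whole axis, hence the origin, into the flat
  have hax := h.axis_le hl hl' hne (mem_affineSpan K (Set.mem_insert _ _))
    (heq.symm ▸ mem_affineSpan K (Set.mem_insert _ _))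
  exact hinf ▸ ⟨hax (K ∙ v).zero_mem, W.zero_mem⟩

lemma le_gdim_union [DecidableEq V] {k : ℤ} (hk : 0 ≤ k) :
    gdim K S k + L.card ≤ gdim K (S ∪ L) (k + 1) := by
  obtain ⟨A, hA, ⟨G, hG1, hG2, hG3⟩, hAcard⟩ := exists_essDimLE_card_eq_gdim (K := K) S hk
  have hv : v ≠ 0 := by
    rintro rfl
    exact h.notMem_submodule W.zero_mem
  rw [← hAcard, ← Finset.card_union_of_disjoint (h.disjoint.mono_left hA)]
  refine le_gdim (Finset.union_subset_union hA subset_rfl)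
    ⟨insert (K ∙ v).toAffineSubspace G, ?_, fun q hq => ?_, ?_⟩
  · exact Finset.forall_mem_insert _ _ _ |>.2 ⟨(adim_span_singleton_toAffineSubspace hv).ge, hG1⟩
  · rcases Finset.mem_union.1 hq with hqA | hqL
    · obtain ⟨Γ, hΓ, hqΓ⟩ := hG2 q hqA
      exact ⟨Γ, Finset.mem_insert_of_mem hΓ, hqΓ⟩
    · exact ⟨_, Finset.mem_insert_self _ _, h.subset_axis q hqL⟩
  · have hsum := sum_insert_le_add (s := G) (f := adim)
      (zero_le_one.trans (adim_span_singleton_toAffineSubspace (K := K) hv).ge)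
    rw [adim_span_singleton_toAffineSubspace hv] at hsum
    omega

variable [FiniteDimensional K V]

lemma spans_union_insert {j : ℤ} {T : AffineSubspace K V} (hT : Spans (S : Set V) j T)
    {l : V} (hl : l ∈ L) :
    Spans ((S : Set V) ∪ L) (j + 1) (affineSpan K (insert l (T : Set V))) := by
  refine ⟨?_, ?_⟩
  · rw [adim_affineSpan_insert fun hlT => h.notMem_of_mem_right hl (h.le_of_spans hT hlT), hT.1]
  refine le_antisymm (affineSpan_le.2 fun x hx => hx.2) ?_
  conv_lhs => rw [← hT.2, affineSpan_insert_affineSpan]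
  exact affineSpan_mono K (Set.insert_subset ⟨Or.inr hl, mem_affineSpan K (Set.mem_insert _ _)⟩
    fun x hx => ⟨Or.inl hx.1, mem_affineSpan K (Set.mem_insert_of_mem _ hx.2)⟩)

lemma spans_union_cases {j : ℤ} {Γ : AffineSubspace K V} (hΓ : Spans ((S : Set V) ∪ L) j Γ) :
    Spans (S : Set V) j Γ ∨
      (∃ (T : AffineSubspace K V) (l : V), Spans (S : Set V) (j - 1) T ∧ l ∈ L ∧
        Γ = affineSpan K (insert l (T : Set V))) ∨
      ∃ T : AffineSubspace K V, Spans (S : Set V) (j - 2) T ∧ Γ = T ⊔ (K ∙ v).toAffineSubspace := by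
  set T := affineSpan K ((S : Set V) ∩ Γ)
  have hTS : affineSpan K ((S : Set V) ∩ T) = T := affineSpan_inter_affineSpan_inter _ _
  have hΓT : Γ = T ⊔ affineSpan K ((L : Set V) ∩ Γ) := by
    rw [← span_union, ← Set.union_inter_distrib_right, hΓ.2]
  rcases ((L : Set V) ∩ Γ).eq_empty_or_nonempty with hLΓ | hLΓ
  · rw [hLΓ, AffineSubspace.span_empty, sup_bot_eq] at hΓT
    exact Or.inl ⟨hΓ.1, hΓT.symm⟩
  rcases hLΓ.exists_eq_singleton_or_nontrivial with ⟨l, hl⟩ | ⟨l, hl, l', hl', hne⟩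
  · have hlL : l ∈ L := (hl.symm ▸ Set.mem_singleton l : l ∈ (L : Set V) ∩ Γ).1
    have hΓl : Γ = affineSpan K (insert l (T : Set V)) := by
      rw [hΓT, hl, Set.insert_eq, span_union, affineSpan_coe, sup_comm]
    have hdim := adim_affineSpan_insert (T := T) fun hlT =>
      h.notMem_of_mem_right hlL (h.affineSpan_inter_le _ hlT)
    rw [← hΓl, hΓ.1] at hdim
    exact Or.inr (Or.inl ⟨T, l, ⟨by omega, hTS⟩, hlL, hΓl⟩)
  · have hax : affineSpan K ((L : Set V) ∩ Γ) = (K ∙ v).toAffineSubspace :=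
      le_antisymm (affineSpan_le.2 fun x hx => h.subset_axis x hx.1)
        (h.axis_le hl.1 hl'.1 hne (subset_affineSpan K _ hl) (subset_affineSpan K _ hl'))
    rw [hax] at hΓT
    have hdim := adim_sup_span_singleton (T := T) h.notMem_submodule (h.affineSpan_inter_le _)
      (h.zero_notMem_affineSpan_inter _)
    rw [← hΓT, hΓ.1] at hdim
    exact Or.inr (Or.inr ⟨T, ⟨by omega, hTS⟩, hΓT⟩)

lemma nFlats_mul_card_le (j : ℤ) :
    nFlats K (S : Set V) j * L.card ≤ nFlats K ((S : Set V) ∪ L) (j + 1) := by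
  rw [nFlats_eq_ncard, nFlats_eq_ncard, ← Set.ncard_coe_finset L, ← Set.ncard_prod,
    ← (h.injOn_affineSpan_insert j).ncard_image]
  refine Set.ncard_le_ncard ?_ (finite_setOf_spans (S.finite_toSet.union L.finite_toSet) _)
  rintro _ ⟨⟨T, l⟩, ⟨hT, hl⟩, rfl⟩
  exact h.spans_union_insert hT hl

lemma nFlats_union_le (j : ℤ) :
    nFlats K ((S : Set V) ∪ L) j ≤
      nFlats K (S : Set V) j + nFlats K (S : Set V) (j - 1) * L.card +
        nFlats K (S : Set V) (j - 2) := by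
  simp only [nFlats_eq_ncard]
  rw [← Set.ncard_coe_finset L, ← Set.ncard_prod]
  have hfin := finite_setOf_spans (K := K) S.finite_toSet
  set A := {Γ : AffineSubspace K V | Spans (S : Set V) j Γ}
  set B := (fun p : AffineSubspace K V × V => affineSpan K (insert p.2 (p.1 : Set V))) ''
    ({T | Spans (S : Set V) (j - 1) T} ×ˢ (L : Set V))
  set C := (· ⊔ (K ∙ v).toAffineSubspace) '' {T | Spans (S : Set V) (j - 2) T}
  have hcover : {Γ | Spans ((S : Set V) ∪ L) j Γ} ⊆ A ∪ B ∪ C := by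
    intro Γ hΓ
    rcases h.spans_union_cases hΓ with hA | ⟨T, l, hT, hl, rfl⟩ | ⟨T, hT, rfl⟩
    · exact Or.inl (Or.inl hA)
    · exact Or.inl (Or.inr ⟨(T, l), ⟨hT, hl⟩, rfl⟩)
    · exact Or.inr ⟨T, hT, rfl⟩
  calc _ ≤ (A ∪ B ∪ C).ncard :=
        Set.ncard_le_ncard hcover
          (((hfin j).union (((hfin _).prod L.finite_toSet).image _)).union ((hfin _).image _))
    _ ≤ A.ncard + B.ncard + C.ncard :=
        (Set.ncard_union_le _ _).trans (add_le_add_left (Set.ncard_union_le _ _) _)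
    _ ≤ _ :=
        add_le_add (add_le_add_right (Set.ncard_image_le ((hfin _).prod L.finite_toSet)) _)
          (Set.ncard_image_le (hfin _))

lemma essDimLE_of_axis_le {Q : Set V} (hQ : Q ⊆ S) {G : Finset (AffineSubspace K V)}
    (hG1 : ∀ Γ ∈ G, 1 ≤ adim Γ) (hG2 : ∀ q ∈ Q, ∃ Γ ∈ G, q ∈ Γ) {Γ₀ : AffineSubspace K V}
    (hΓ₀ : Γ₀ ∈ G) (hax : (K ∙ v).toAffineSubspace ≤ Γ₀) :
    EssDimLE K Q (∑ Γ ∈ G, adim Γ - 1) := by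
  have h0 : (0 : V) ∈ Γ₀ ⊓ W.toAffineSubspace := ⟨hax (K ∙ v).zero_mem, W.zero_mem⟩
  have hdir : (Γ₀ ⊓ W.toAffineSubspace).direction = Γ₀.direction ⊓ W := by
    rw [direction_inf_of_mem h0.1 h0.2, Submodule.toAffineSubspace_direction]
  have hvΓ₀ : v ∈ Γ₀.direction := direction_le hax <| by
    rw [Submodule.toAffineSubspace_direction]; exact Submodule.mem_span_singleton_self v
  refine essDimLE_sub_one_of_cover hG1 hG2 hΓ₀ (Γ' := Γ₀ ⊓ W.toAffineSubspace)
    (fun q hq hq₀ => ⟨hq₀, h.subset_left q (hQ hq)⟩) ?_ fun hdim q hq hqΓ' => ?_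
  · rw [adim_of_ne_bot ((nonempty_iff_ne_bot _).1 ⟨0, h0⟩),
      adim_of_ne_bot ((nonempty_iff_ne_bot _).1 ⟨0, h0.1⟩), hdir, Nat.cast_lt]
    exact Submodule.finrank_lt_finrank_of_lt
      (inf_le_left.lt_of_ne fun heq => h.notMem_submodule (by rw [← heq] at hvΓ₀; exact hvΓ₀.2))
  · -- the flat `Γ₀ ∩ W` is then the single point `0`, which is not in `S`
    rw [adim_of_ne_bot ((nonempty_iff_ne_bot _).1 ⟨0, h0⟩)] at hdim
    have hbot : (Γ₀ ⊓ W.toAffineSubspace).direction = ⊥ :=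
      Submodule.finrank_eq_zero.1 (by omega)
    have hq0 := vsub_mem_direction hqΓ' h0
    rw [hbot, Submodule.mem_bot, vsub_eq_sub, sub_zero] at hq0
    exact h.zero_notMem_left (hq0 ▸ hQ hq)

lemma gdim_union_le [DecidableEq V] {k : ℤ} (hL : (S.card : ℤ) + k + 1 ≤ L.card) :
    gdim K (S ∪ L) (k + 1) ≤ gdim K S k + L.card := by
  refine gdim_le fun P hP ⟨G, hG1, hG2, hG3⟩ => ?_
  have hP : P.card ≤ (P ∩ S).card + (P ∩ L).card :=
    (Finset.card_le_card fun x hx => by simpa [hx] using hP hx).trans (Finset.card_union_le _ _)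
  have hG2' : ∀ q ∈ P, ∃ Γ ∈ G, q ∈ Γ := fun q hq => hG2 q hq
  by_cases hax : ∃ Γ₀ ∈ G, (K ∙ v).toAffineSubspace ≤ Γ₀
  · obtain ⟨Γ₀, hΓ₀, hle⟩ := hax
    have hess := h.essDimLE_of_axis_le (Q := ((P ∩ S : Finset V) : Set V))
      (by simp [Set.inter_subset_right]) hG1
      (fun q hq => hG2' q (Finset.mem_of_mem_inter_left hq)) hΓ₀ hle
    have hPS := le_gdim Finset.inter_subset_right (hess.mono (t := k) (by omega))
    have hPL := Finset.card_le_card (Finset.inter_subset_right : P ∩ L ⊆ L)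
    omega
  · -- every flat of the cover then meets `L` at most once
    simp only [not_exists, not_and] at hax
    have hPL : (P ∩ L).card ≤ G.card :=
      Finset.card_le_card_of_forall_subsingleton (fun l Γ => l ∈ Γ)
        (fun l hl => hG2' l (Finset.mem_of_mem_inter_left hl))
        fun Γ hΓ l hl l' hl' => by_contra fun hne => hax Γ hΓ
          (h.axis_le (Finset.mem_of_mem_inter_right hl.1) (Finset.mem_of_mem_inter_right hl'.1)
            hne hl.2 hl'.2)
    have hG : (G.card : ℤ) ≤ ∑ Γ ∈ G, adim Γ := by
      simpa using Finset.card_nsmul_le_sum G adim 1 hG1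
    have hPS := Finset.card_le_card (Finset.inter_subset_right : P ∩ S ⊆ S)
    omega

lemma gdim_union_eq [DecidableEq V] {k : ℤ} (hk : 0 ≤ k)
    (hL : (S.card : ℤ) + k + 1 ≤ L.card) :
    gdim K (S ∪ L) (k + 1) = gdim K S k + L.card :=
  (h.gdim_union_le hL).antisymm (h.le_gdim_union hk)

end IsAxialExtension

end AxialExtension

lemma mem_span_single_zero_iff {d : ℕ} [NeZero d] {p : Fin d → ℝ} :
    p ∈ ℝ ∙ (Pi.single 0 1 : Fin d → ℝ) ↔ ∀ i, i ≠ 0 → p i = 0 := by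
  refine Submodule.mem_span_singleton.trans ⟨?_, fun hp => ⟨p 0, funext fun i => ?_⟩⟩
  · rintro ⟨a, rfl⟩ i hi
    simp [hi]
  · by_cases hi : i = 0
    · subst hi; simp
    · simp [hi, hp i hi]

lemma isAxialExtension_coordinateAxis {d : ℕ} [NeZero d] {S L : Finset (Fin d → ℝ)}
    (hS : ∀ p ∈ S, p 0 = 0)
    (hO : ∀ Γ : AffineSubspace ℝ (Fin d → ℝ),
      (∃ j : ℤ, 0 ≤ j ∧ Spans (S : Set (Fin d → ℝ)) j Γ) → (0 : Fin d → ℝ) ∉ Γ)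
    (hL : ∀ p ∈ L, ∀ i, i ≠ 0 → p i = 0) (hL0 : (0 : Fin d → ℝ) ∉ L) :
    IsAxialExtension (LinearMap.ker (LinearMap.proj (R := ℝ) (φ := fun _ : Fin d => ℝ) 0))
      (Pi.single 0 1) S L where
  notMem_submodule := by simp
  subset_left := hS
  subset_axis p hp := mem_span_single_zero_iff.2 (hL p hp)
  zero_notMem_right := hL0
  zero_notMem_of_spanned Γ hΓ := by
    rcases eq_or_ne Γ ⊥ with rfl | hne
    · exact AffineSubspace.notMem_bot ℝ _ _
    · exact hO Γ ⟨adim Γ, by rw [adim_of_ne_bot hne]; positivity, rfl, hΓ⟩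

theorem stmt_17_general {d : ℕ} [NeZero d] (k : ℤ) (hk : 0 < k) (c : ℤ)
    (S : Finset (Fin d → ℝ))
    (hS : ∀ p ∈ S, p 0 = 0)
    (hf : nFlats ℝ (S : Set (Fin d → ℝ)) k < nFlats ℝ (S : Set (Fin d → ℝ)) (k - 1))
    (hO : ∀ Γ : AffineSubspace ℝ (Fin d → ℝ),
      (∃ j : ℤ, 0 ≤ j ∧ Spans (S : Set (Fin d → ℝ)) j Γ) → (0 : Fin d → ℝ) ∉ Γ)
    (hg : (S.card : ℤ) - gdim ℝ S k = c) :
    ∃ m0 : ℕ, ∀ m : ℕ, m0 ≤ m → ∀ L : Finset (Fin d → ℝ),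
      L.card = m → (∀ p ∈ L, ∀ i, i ≠ 0 → p i = 0) → (0 : Fin d → ℝ) ∉ L →
      nFlats ℝ ((S : Set (Fin d → ℝ)) ∪ (L : Set (Fin d → ℝ))) (k + 1) <
          nFlats ℝ ((S : Set (Fin d → ℝ)) ∪ (L : Set (Fin d → ℝ))) k ∧
        ((S ∪ L).card : ℤ) - gdim ℝ (S ∪ L) (k + 1) = c := by
  refine ⟨S.card + k.toNat + nFlats ℝ (S : Set (Fin d → ℝ)) (k + 1) +
    nFlats ℝ (S : Set (Fin d → ℝ)) (k - 1) + 1, fun m hm L hLm hL hL0 => ?_⟩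
  have h := isAxialExtension_coordinateAxis hS hO hL hL0
  have hupper := h.nFlats_union_le (k + 1)
  have hlower := h.nFlats_mul_card_le (k - 1)
  rw [add_sub_cancel_right, show k + 1 - 2 = k - 1 by ring] at hupper
  rw [sub_add_cancel] at hlower
  refine ⟨?_, ?_⟩
  · nlinarith [Nat.mul_le_mul_right L.card (Nat.succ_le_of_lt hf)]
  · rw [h.gdim_union_eq hk.le (by omega), Finset.card_union_of_disjoint h.disjoint]
    push_cast
    omega

/-- Monotonicity construction: if `S` lies in the hyperplane `x_0 = 0` of `ℝ^d` with
`f_k(S) < f_{k-1}(S)`, no flat spanned by `S` passes through the origin, every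
`(k+1)`-flat through the origin contains no more points of `S` than some `k`-flat does, and
`|S| - g_k(S) = c`, then for all sufficiently large `m`, adding a set `L` of `m` collinear
points on the axis through the origin perpendicular to the hyperplane (avoiding the origin)
yields `P = S ∪ L` with `f_{k+1}(P) < f_k(P)` and `|P| - g_{k+1}(P) = c`. -/
theorem stmt_17 {d : ℕ} [NeZero d] (k : ℤ) (hk : 0 < k) (c : ℤ)
    (S : Finset (Fin d → ℝ))
    (hS : ∀ p ∈ S, p 0 = 0)
    (hf : nFlats ℝ (S : Set (Fin d → ℝ)) k < nFlats ℝ (S : Set (Fin d → ℝ)) (k - 1))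
    (hO : ∀ Γ : AffineSubspace ℝ (Fin d → ℝ),
      (∃ j : ℤ, 0 ≤ j ∧ Spans (S : Set (Fin d → ℝ)) j Γ) → (0 : Fin d → ℝ) ∉ Γ)
    (hgen : ∀ Γ : AffineSubspace ℝ (Fin d → ℝ), adim Γ = k + 1 → (0 : Fin d → ℝ) ∈ Γ →
      ∃ Γ' : AffineSubspace ℝ (Fin d → ℝ), adim Γ' = k ∧
        (S.filter (fun p => p ∈ Γ)).card ≤ (S.filter (fun p => p ∈ Γ')).card)
    (hg : (S.card : ℤ) - gdim ℝ S k = c) :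
    ∃ m0 : ℕ, ∀ m : ℕ, m0 ≤ m → ∀ L : Finset (Fin d → ℝ),
      L.card = m → (∀ p ∈ L, ∀ i, i ≠ 0 → p i = 0) → (0 : Fin d → ℝ) ∉ L →
      nFlats ℝ ((S : Set (Fin d → ℝ)) ∪ (L : Set (Fin d → ℝ))) (k + 1) <
          nFlats ℝ ((S : Set (Fin d → ℝ)) ∪ (L : Set (Fin d → ℝ))) k ∧
        ((S ∪ L).card : ℤ) - gdim ℝ (S ∪ L) (k + 1) = c :=
  stmt_17_general k hk c S hS hf hO hg
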